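/- Consider maximizing ∑_{k∈S} log(y_k R_k W) subject to ∑_{k∈S} y_k ≤ Q and ∑_{k∈S} y_k R_k W ≤ Z with y_k > 0. If ∑_{k∈S} R_k ≤ |S| Z / (W Q), then y_k* = Q/|S| for all k is a global maximizer; otherwise y_k* = Z/(|S| R_k W) for all k is a global maximizer (provided it satisfies ∑ y_k* ≤ Q). -/
import Mathlib

/-- Key AM–GM style bound: for positive `x` with `∑ x ≤ C`,
`∑ log x ≤ |S| * log (C / |S|)`. -/
lemma key_log_sum {ι : Type*} (S : Finset ι) (hS : S.Nonempty)
    (x : ι → ℝ) (hx : ∀ k ∈ S, 0 < x k) (C : ℝ) (hC : 0 < C)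
    (h : (∑ k ∈ S, x k) ≤ C) :
    ∑ k ∈ S, Real.log (x k) ≤ S.card * Real.log (C / S.card) := by
  have hn : (0:ℝ) < S.card := by exact_mod_cast Finset.card_pos.mpr hS
  set c : ℝ := C / S.card with hc
  have hcpos : 0 < c := div_pos hC hn
  have step : ∀ k ∈ S, Real.log (x k) ≤ Real.log c + (x k / c - 1) := by
    intro k hk
    have hxk := hx k hk
    have h1 : Real.log (x k / c) ≤ x k / c - 1 :=
      Real.log_le_sub_one_of_pos (div_pos hxk hcpos)
    have h2 : Real.log (x k / c) = Real.log (x k) - Real.log c :=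
      Real.log_div (ne_of_gt hxk) (ne_of_gt hcpos)
    linarith
  calc ∑ k ∈ S, Real.log (x k)
      ≤ ∑ k ∈ S, (Real.log c + (x k / c - 1)) := Finset.sum_le_sum step
    _ = S.card * Real.log c + ((∑ k ∈ S, x k) / c - S.card) := by
        rw [Finset.sum_add_distrib, Finset.sum_const, nsmul_eq_mul,
          Finset.sum_sub_distrib, Finset.sum_const, nsmul_eq_mul, mul_one,
          ← Finset.sum_div]
    _ ≤ S.card * Real.log c + (C / c - S.card) := by
        
        gcongr
    _ = S.card * Real.log c := by
        have : C / c = S.card := by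
          rw [hc]; field_simp
        rw [this]; ring


/-- Proposition 1: if `∑ R k ≤ |S| Z / (W Q)` then equal resource shares
`y k = Q/|S|` are a global maximizer; otherwise, equal rates `y k = Z/(|S| R k W)` are a
global maximizer, provided this allocation satisfies `∑ y k ≤ Q`. -/
theorem stmt_4 {ι : Type*} (S : Finset ι) (hS : S.Nonempty)
    (R : ι → ℝ) (hR : ∀ k ∈ S, 0 < R k) (W Q Z : ℝ)
    (hW : 0 < W) (hQ : 0 < Q) (hZ : 0 < Z) :
    ((∑ k ∈ S, R k) ≤ S.card * Z / (W * Q) →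
      ∀ y : ι → ℝ, (∀ k ∈ S, 0 < y k) → (∑ k ∈ S, y k) ≤ Q →
        (∑ k ∈ S, y k * R k * W) ≤ Z →
        ∑ k ∈ S, Real.log (y k * R k * W)
          ≤ ∑ k ∈ S, Real.log ((Q / S.card) * R k * W)) ∧
    (¬ ((∑ k ∈ S, R k) ≤ S.card * Z / (W * Q)) →
      (∑ k ∈ S, Z / (S.card * R k * W)) ≤ Q →
      ∀ y : ι → ℝ, (∀ k ∈ S, 0 < y k) → (∑ k ∈ S, y k) ≤ Q →
        (∑ k ∈ S, y k * R k * W) ≤ Z →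
        ∑ k ∈ S, Real.log (y k * R k * W)
          ≤ ∑ k ∈ S, Real.log ((Z / (S.card * R k * W)) * R k * W)) := by
  have hn : (0:ℝ) < S.card := by exact_mod_cast Finset.card_pos.mpr hS
  constructor
  · intro _ y hy hyQ _
    have hsplit : ∀ z : ι → ℝ, (∀ k ∈ S, 0 < z k) →
        ∑ k ∈ S, Real.log (z k * R k * W)
          = (∑ k ∈ S, Real.log (z k)) + ∑ k ∈ S, Real.log (R k * W) := by
      intro z hz
      rw [← Finset.sum_add_distrib]
      refine Finset.sum_congr rfl fun k hk => ?_
      rw [mul_assoc, Real.log_mul (ne_of_gt (hz k hk))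
        (ne_of_gt (mul_pos (hR k hk) hW))]
    rw [hsplit y hy, hsplit (fun _ => Q / S.card)
      (fun k _ => div_pos hQ hn)]
    have h1 : (∑ k ∈ S, Real.log (y k)) ≤ S.card * Real.log (Q / S.card) :=
      key_log_sum S hS y hy Q hQ hyQ
    have h2 : (∑ k ∈ S, Real.log (Q / S.card)) = S.card * Real.log (Q / S.card) := by
      rw [Finset.sum_const, nsmul_eq_mul]
    linarith
  · intro _ _ y hy _ hyZ
    have h1 : ∑ k ∈ S, Real.log (y k * R k * W) ≤ S.card * Real.log (Z / S.card) :=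
      key_log_sum S hS (fun k => y k * R k * W)
        (fun k hk => mul_pos (mul_pos (hy k hk) (hR k hk)) hW) Z hZ hyZ
    have h2 : ∀ k ∈ S, (Z / (S.card * R k * W)) * R k * W = Z / S.card := by
      intro k hk
      have hRk := (hR k hk).ne'
      field_simp
    calc ∑ k ∈ S, Real.log (y k * R k * W)
        ≤ S.card * Real.log (Z / S.card) := h1
      _ = ∑ k ∈ S, Real.log ((Z / (S.card * R k * W)) * R k * W) := by
          rw [Finset.sum_congr rfl fun k hk => by rw [h2 k hk],
            Finset.sum_const, nsmul_eq_mul]
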